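/- Let Q : ℝ → ℝ be differentiable and suppose there exist constants K₁, K₂ > 0 such that Q'(x) ≤ -K₂ for all x ≤ -K₁ and Q'(x) ≥ K₂ for all x ≥ K₁. Then Q has exponentially tight level sets: there exists a₀ > 0 such that for every a ≥ a₀ there is a constant C(a) > 0 with ∫_{y : Q(y) ≥ a} exp(-Q(z)/ε) dz ≤ C(a) exp(-a/ε) for all ε ∈ (0,1]. -/

import Mathlib

/-!
By the mean value theorem the derivative bounds make `Q` grow at least linearly, with slope
`K₂`, outside `[-K₁, K₁]`, so `exp (-Q)` is dominated by exponentials there and is integrable.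
On `{Q ≥ a}` and for `ε ≤ 1` one has `(Q - a) / ε ≥ Q - a`, hence
`exp (-Q / ε) ≤ exp (-a / ε) · exp a · exp (-Q)`, and integrating gives a constant
`C(a) = exp a · (∫ exp (-Q) + 1)` independent of `ε`.
-/

open MeasureTheory Set Real

theorem exp_neg_div_le_of_le {a t ε : ℝ} (hat : a ≤ t) (hε0 : 0 < ε) (hε1 : ε ≤ 1) :
    exp (-t / ε) ≤ exp (-a / ε) * (exp a * exp (-t)) := by
  rw [← exp_add, ← exp_add, exp_le_exp]
  have : t - a ≤ (t - a) / ε := le_div_self (sub_nonneg.2 hat) hε0 hε1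
  have hsplit : -t / ε = -a / ε - (t - a) / ε := by ring
  linarith

theorem setIntegral_exp_neg_div_le {α : Type*} [MeasurableSpace α] {μ : Measure α} {f : α → ℝ}
    (hf : Measurable f) (hint : Integrable (fun z => exp (-f z)) μ) (a : ℝ) {ε : ℝ}
    (hε0 : 0 < ε) (hε1 : ε ≤ 1) :
    ∫ z in {z | a ≤ f z}, exp (-f z / ε) ∂μ ≤ exp a * (∫ z, exp (-f z) ∂μ) * exp (-a / ε) := by
  have hS : MeasurableSet {z | a ≤ f z} := measurableSet_le measurable_const hf
  have hbound : IntegrableOn (fun z => exp (-a / ε) * (exp a * exp (-f z))) {z | a ≤ f z} μ :=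
    ((hint.const_mul _).const_mul _).integrableOn
  have hpt : ∀ z ∈ {z | a ≤ f z}, exp (-f z / ε) ≤ exp (-a / ε) * (exp a * exp (-f z)) :=
    fun z hz => exp_neg_div_le_of_le hz hε0 hε1
  have hint_ε : IntegrableOn (fun z => exp (-f z / ε)) {z | a ≤ f z} μ := by
    refine hbound.mono' (hf.neg.div_const ε).exp.aestronglyMeasurable ?_
    filter_upwards [ae_restrict_mem hS] with z hz
    rw [norm_of_nonneg (exp_pos _).le]
    exact hpt z hz
  calc ∫ z in {z | a ≤ f z}, exp (-f z / ε) ∂μ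
      ≤ ∫ z in {z | a ≤ f z}, exp (-a / ε) * (exp a * exp (-f z)) ∂μ :=
        setIntegral_mono_on hint_ε hbound hS hpt
    _ = exp (-a / ε) * (exp a * ∫ z in {z | a ≤ f z}, exp (-f z) ∂μ) := by
        rw [integral_const_mul, integral_const_mul]
    _ ≤ exp (-a / ε) * (exp a * ∫ z, exp (-f z) ∂μ) := by
        refine mul_le_mul_of_nonneg_left (mul_le_mul_of_nonneg_left ?_ (exp_pos a).le)
          (exp_pos _).le
        exact setIntegral_le_integral hint (.of_forall fun z => (exp_pos _).le)
    _ = exp a * (∫ z, exp (-f z) ∂μ) * exp (-a / ε) := by ring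

theorem integrableOn_exp_neg_of_le_affine {f : ℝ → ℝ} (hf : Continuous f) {s : Set ℝ}
    (hs : MeasurableSet s) {A b : ℝ} (hb : IntegrableOn (fun x => exp (b * x)) s)
    (hfs : ∀ x ∈ s, A - b * x ≤ f x) : IntegrableOn (fun x => exp (-f x)) s := by
  refine (hb.const_mul (exp (-A))).mono' hf.neg.rexp.aestronglyMeasurable ?_
  filter_upwards [ae_restrict_mem hs] with x hx
  rw [norm_of_nonneg (exp_pos _).le, ← exp_add, exp_le_exp]
  linarith [hfs x hx]

theorem integrable_exp_neg_of_deriv_bounds {Q : ℝ → ℝ} (hQ : Differentiable ℝ Q) {K₁ K₂ : ℝ}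
    (hK₂ : 0 < K₂) (h1 : ∀ x ≤ -K₁, deriv Q x ≤ -K₂) (h2 : ∀ x, K₁ ≤ x → K₂ ≤ deriv Q x) :
    Integrable (fun x => exp (-Q x)) := by
  have hQc := hQ.continuous
  have hleft : IntegrableOn (fun x => exp (-Q x)) (Iic (-K₁)) := by
    refine integrableOn_exp_neg_of_le_affine hQc measurableSet_Iic
      (integrableOn_exp_mul_Iic hK₂ _) (A := Q (-K₁) - K₂ * K₁) fun x hx => ?_
    have := (convex_Iic (-K₁)).image_sub_le_mul_sub_of_deriv_le hQc.continuousOn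
      hQ.differentiableOn (fun y hy => h1 y (interior_subset (s := Iic (-K₁)) hy)) x hx (-K₁) self_mem_Iic hx
    linarith
  have hright : IntegrableOn (fun x => exp (-Q x)) (Ioi K₁) := by
    refine integrableOn_exp_neg_of_le_affine hQc measurableSet_Ioi
      (integrableOn_exp_mul_Ioi (neg_neg_of_pos hK₂) _) (A := Q K₁ - K₂ * K₁) fun x hx => ?_
    have := (convex_Ici K₁).mul_sub_le_image_sub_of_le_deriv hQc.continuousOn
      hQ.differentiableOn (fun y hy => h2 y (interior_subset (s := Ici K₁) hy)) K₁ self_mem_Ici x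
      (mem_Ici.2 (le_of_lt hx)) (le_of_lt hx)
    linarith
  have hmiddle : IntegrableOn (fun x => exp (-Q x)) (Icc (-K₁) K₁) :=
    hQc.neg.rexp.continuousOn.integrableOn_Icc
  have hcover : Iic (-K₁) ∪ Icc (-K₁) K₁ ∪ Ioi K₁ = univ := by
    ext x
    simp only [mem_union, mem_Iic, mem_Icc, mem_Ioi, mem_univ, iff_true]
    grind
  rw [← integrableOn_univ, ← hcover]
  exact (hleft.union hmiddle).union hright

theorem stmt0_general (Q : ℝ → ℝ) (hQ : Differentiable ℝ Q) (K₁ K₂ : ℝ)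
    (hK₂ : 0 < K₂)
    (h1 : ∀ x ≤ -K₁, deriv Q x ≤ -K₂)
    (h2 : ∀ x, K₁ ≤ x → K₂ ≤ deriv Q x) :
    ∃ a₀ > 0, ∀ a ≥ a₀, ∃ C > 0, ∀ ε ∈ Set.Ioc (0:ℝ) 1,
      ∫ z in {z : ℝ | a ≤ Q z}, Real.exp (-Q z / ε) ≤ C * Real.exp (-a / ε) := by
  have hint := integrable_exp_neg_of_deriv_bounds hQ hK₂ h1 h2
  have hI : 0 ≤ ∫ z, exp (-Q z) := integral_nonneg fun z => (exp_pos _).le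
  refine ⟨1, one_pos, fun a _ => ⟨exp a * ((∫ z, exp (-Q z)) + 1), by positivity, ?_⟩⟩
  rintro ε ⟨hε0, hε1⟩
  calc ∫ z in {z : ℝ | a ≤ Q z}, exp (-Q z / ε)
      ≤ exp a * (∫ z, exp (-Q z)) * exp (-a / ε) :=
        setIntegral_exp_neg_div_le hQ.continuous.measurable hint a hε0 hε1
    _ ≤ exp a * ((∫ z, exp (-Q z)) + 1) * exp (-a / ε) := by gcongr; linarith

/-- Exponentially tight level sets for a potential with derivative bounded away
from zero outside a compact interval. -/
theorem stmt0 (Q : ℝ → ℝ) (hQ : Differentiable ℝ Q) (K₁ K₂ : ℝ)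
    (hK₁ : 0 < K₁) (hK₂ : 0 < K₂)
    (h1 : ∀ x ≤ -K₁, deriv Q x ≤ -K₂)
    (h2 : ∀ x, K₁ ≤ x → K₂ ≤ deriv Q x) :
    ∃ a₀ > 0, ∀ a ≥ a₀, ∃ C > 0, ∀ ε ∈ Set.Ioc (0:ℝ) 1,
      ∫ z in {z : ℝ | a ≤ Q z}, Real.exp (-Q z / ε) ≤ C * Real.exp (-a / ε) :=
  stmt0_general Q hQ K₁ K₂ hK₂ h1 h2
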